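/- The map Φ defined on {y ∈ [0,1]^V : ‖y‖ < 1} by Φ(0) = 0 and Φ(y) = ρ(y/‖y‖)·y for y ≠ 0 is a homeomorphism from {y ∈ [0,1]^V : ‖y‖ < 1} onto R(G), where both sets carry the subspace topology from ℝ^V. (Lemma 4.3(4).) -/

import Mathlib

open scoped Classical ENNReal

set_option linter.unusedSectionVars false

variable {V : Type*} [Fintype V] [DecidableEq V]

/-- An admissible swap exchanges two consecutive letters that are adjacent in `G`. -/
def AdjSwap (G : SimpleGraph V) (w w' : List V) : Prop :=
  ∃ (a b : List V) (u v : V), G.Adj u v ∧ w = a ++ u :: v :: b ∧ w' = a ++ v :: u :: b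

/-- Two words are equivalent if one can be transformed into the other by finitely many
admissible swaps. -/
def WordEquiv (G : SimpleGraph V) : List V → List V → Prop :=
  Relation.ReflTransGen (AdjSwap G)

lemma adjSwap_symm (G : SimpleGraph V) : Symmetric (AdjSwap G) := by
  rintro w w' ⟨a, b, u, v, h, rfl, rfl⟩
  exact ⟨a, b, v, u, h.symm, rfl, rfl⟩

/-- The setoid of words modulo admissible swaps. -/
def wordSetoid (G : SimpleGraph V) : Setoid (List V) where
  r := WordEquiv G
  iseqv := ⟨fun _ => Relation.ReflTransGen.refl,
    fun h => by
      induction h with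
      | refl => exact Relation.ReflTransGen.refl
      | tail _ hs ih => exact Relation.ReflTransGen.head (adjSwap_symm G hs) ih,
    fun h h' => Relation.ReflTransGen.trans h h'⟩

/-- A word is `G`-reduced if between any two equal letters there is a letter distinct from
them and not adjacent to them. -/
def IsGReduced (G : SimpleGraph V) (w : List V) : Prop :=
  ∀ i j : Fin w.length, i < j → w.get i = w.get j →
    ∃ k : Fin w.length, i < k ∧ k < j ∧ w.get k ≠ w.get i ∧ ¬ G.Adj (w.get k) (w.get i)

/-- The product `x_{w_1} ⋯ x_{w_ℓ}` depends only on the equivalence class of a word. -/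
noncomputable def classProd (G : SimpleGraph V) (x : V → ℝ≥0∞) :
    Quotient (wordSetoid G) → ℝ≥0∞ :=
  Quotient.lift (fun w : List V => (w.map x).prod) (by
    intro a b h
    induction h with
    | refl => rfl
    | tail _ hs ih =>
        obtain ⟨a', b', u, v, huv, rfl, rfl⟩ := hs
        rw [ih]
        simp only [List.map_append, List.prod_append, List.map_cons, List.prod_cons]
        ring)

/-- `tildeF G x` : the sum over all equivalence classes of words of `∏ x_{w_i}`,
valued in `[0,∞]`. -/
noncomputable def tildeF (G : SimpleGraph V) (x : V → ℝ) : ℝ≥0∞ :=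
  ∑' c : Quotient (wordSetoid G), classProd G (fun v => ENNReal.ofReal (x v)) c

/-- `redF G x` : the sum over all equivalence classes of `G`-reduced words of `∏ x_{w_i}`,
valued in `[0,∞]`. -/
noncomputable def redF (G : SimpleGraph V) (x : V → ℝ) : ℝ≥0∞ :=
  ∑' c : {c : Quotient (wordSetoid G) // ∃ w, IsGReduced G w ∧ Quotient.mk (wordSetoid G) w = c},
    classProd G (fun v => ENNReal.ofReal (x v)) c.1

/-- The clique polynomial `𝕶_{G,V'}(x) = ∑_{cliques K ⊆ V'} (-1)^{|K|} ∏_{v ∈ K} x_v`. -/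
noncomputable def cliquePoly (G : SimpleGraph V) (V' : Finset V) (x : V → ℝ) : ℝ :=
  ∑ K ∈ V'.powerset.filter (fun K : Finset V => G.IsClique (K : Set V)),
    (-1 : ℝ) ^ K.card * ∏ v ∈ K, x v

/-- The Euclidean norm on `ℝ^V`. -/
noncomputable def eucNorm (x : V → ℝ) : ℝ := Real.sqrt (∑ v, x v ^ 2)

/-- `min_{V' ⊆ V} 𝕶_{G,V'}(x)`. -/
noncomputable def minK (G : SimpleGraph V) (x : V → ℝ) : ℝ :=
  Finset.univ.inf' ⟨∅, Finset.mem_univ _⟩ fun V' : Finset V => cliquePoly G V' x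

/-- `ρ(u) = inf {r ∈ [0,∞) : min_{V' ⊆ V} 𝕶_{G,V'}(r·u) = 0}`. -/
noncomputable def rho (G : SimpleGraph V) (u : V → ℝ) : ℝ :=
  sInf {r : ℝ | 0 ≤ r ∧ minK G (r • u) = 0}

/-- The region `R(G) = {x ∈ [0,1]^V : 𝕶_{G,V'}(x) > 0 for all V' ⊆ V}`. -/
def regionR (G : SimpleGraph V) : Set (V → ℝ) :=
  {x | (∀ v, x v ∈ Set.Icc (0 : ℝ) 1) ∧ ∀ V' : Finset V, 0 < cliquePoly G V' x}

/-!
Along a nonnegative ray `r ↦ r • u` the clique polynomials start at `1`, and the recursion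
`𝕶_{V'} = 𝕶_{V' \ v} - x_v 𝕶_{V' ∩ N(v)}` shows that lowering a coordinate of a point where all
`𝕶_{V'}` are positive keeps them positive. Hence `R(G)` is a down-set of the orthant and meets
each ray exactly in `[0, ρ(u)) • u`, so `Φ` stretches the segment `[0, 1) • u` linearly onto it,
with inverse `x ↦ ρ(x / ‖x‖)⁻¹ • x`. Both maps are continuous away from `0` because `ρ` is
continuous on nonzero nonnegative vectors, and at `0` because `ρ` and `ρ⁻¹` are bounded on the
compact nonnegative unit sphere.
-/

section CliquePoly

variable {G : SimpleGraph V}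

lemma cliquePoly_congr {V' : Finset V} {x y : V → ℝ} (h : ∀ v ∈ V', x v = y v) :
    cliquePoly G V' x = cliquePoly G V' y := by
  refine Finset.sum_congr rfl fun K hK => ?_
  rw [Finset.prod_congr rfl fun v hv => h v ((Finset.mem_powerset.1 (Finset.mem_filter.1 hK).1) hv)]

lemma cliquePoly_empty (x : V → ℝ) : cliquePoly G ∅ x = 1 := by
  simp [cliquePoly, Finset.filter_singleton]

/-- A clique of `V'` containing `v` is `v` together with a clique of the neighbourhood of `v`
in `V'`. -/
lemma cliquePoly_eq_sub {V' : Finset V} {v : V} (hv : v ∈ V') (x : V → ℝ) :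
    cliquePoly G V' x =
      cliquePoly G (V'.erase v) x - x v * cliquePoly G (V'.filter (G.Adj v)) x := by
  set N := (V'.filter (G.Adj v)).powerset.filter fun K : Finset V => G.IsClique (K : Set V)
  have hvN : ∀ K ∈ N, v ∉ K := fun K hK hvK =>
    G.irrefl (Finset.mem_filter.1 (Finset.mem_powerset.1 (Finset.mem_filter.1 hK).1 hvK)).2
  have hN : ((V'.erase v).powerset.filter fun K : Finset V =>
      G.IsClique ((insert v K : Finset V) : Set V)) = N := by
    ext K
    simp only [N, Finset.coe_insert, SimpleGraph.isClique_insert, Finset.mem_filter,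
      Finset.mem_powerset, Finset.subset_iff, Finset.mem_coe, Finset.mem_erase]
    constructor
    · rintro ⟨hK, hcl, hadj⟩
      exact ⟨fun w hw => ⟨(hK hw).2, hadj w hw (hK hw).1.symm⟩, hcl⟩
    · rintro ⟨hadj, hcl⟩
      exact ⟨fun w hw => ⟨fun h => G.irrefl (h ▸ (hadj hw).2), (hadj hw).1⟩, hcl,
        fun w hw _ => (hadj hw).2⟩
  have hinj : Set.InjOn (insert v) (N : Set (Finset V)) := fun K hK L hL hKL => by
    rw [← Finset.erase_insert (hvN K hK), hKL, Finset.erase_insert (hvN L hL)]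
  unfold cliquePoly
  conv_lhs => rw [← Finset.insert_erase hv, Finset.powerset_insert, Finset.filter_union,
    Finset.filter_image, hN]
  rw [Finset.sum_union, Finset.sum_image hinj, Finset.mul_sum, sub_eq_add_neg,
    ← Finset.sum_neg_distrib]
  · refine congrArg _ (Finset.sum_congr rfl fun K hK => ?_)
    rw [Finset.card_insert_of_notMem (hvN K hK), Finset.prod_insert (hvN K hK), pow_succ]
    ring
  · refine Finset.disjoint_left.2 fun K hK hK' => ?_
    obtain ⟨L, -, rfl⟩ := Finset.mem_image.1 hK'
    exact Finset.notMem_erase v V'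
      (Finset.mem_powerset.1 (Finset.mem_filter.1 hK).1 (Finset.mem_insert_self v L))

lemma cliquePoly_singleton (v : V) (x : V → ℝ) : cliquePoly G {v} x = 1 - x v := by
  rw [cliquePoly_eq_sub (Finset.mem_singleton_self v), Finset.erase_singleton,
    Finset.filter_singleton, if_neg (G.irrefl), cliquePoly_empty, mul_one]

lemma cliquePoly_zero (V' : Finset V) : cliquePoly G V' 0 = 1 := by
  induction V' using Finset.induction_on with
  | empty => exact cliquePoly_empty 0
  | insert v V' hv ih =>
    rw [cliquePoly_eq_sub (Finset.mem_insert_self v V'), Finset.erase_insert hv, ih,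
      Pi.zero_apply, zero_mul, sub_zero]

lemma continuous_cliquePoly (V' : Finset V) : Continuous (cliquePoly G V') :=
  continuous_finsetSum _ fun _ _ =>
    continuous_const.mul (continuous_finsetProd _ fun v _ => continuous_apply v)

/-- By `cliquePoly_eq_sub`, `𝕶_{V'}` is affine and nonincreasing in `x v` as long as
`𝕶_{V' ∩ N(v)} > 0`, which does not involve `x v`. -/
lemma cliquePoly_update_pos {x : V → ℝ} (hx : ∀ V', 0 < cliquePoly G V' x) {v : V} {c : ℝ}
    (hc : c ≤ x v) (V' : Finset V) : 0 < cliquePoly G V' (Function.update x v c) := by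
  by_cases hv : v ∈ V'
  · have hdel : cliquePoly G (V'.erase v) (Function.update x v c) = cliquePoly G (V'.erase v) x :=
      cliquePoly_congr fun w hw => Function.update_of_ne (Finset.ne_of_mem_erase hw) _ _
    have hnbr : cliquePoly G (V'.filter (G.Adj v)) (Function.update x v c) =
        cliquePoly G (V'.filter (G.Adj v)) x :=
      cliquePoly_congr fun w hw =>
        Function.update_of_ne (fun h => G.irrefl (h ▸ (Finset.mem_filter.1 hw).2)) _ _
    have hpos := hx V'
    rw [cliquePoly_eq_sub hv] at hpos ⊢
    rw [hdel, hnbr, Function.update_self]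
    nlinarith [mul_le_mul_of_nonneg_right hc (hx (V'.filter (G.Adj v))).le]
  · rw [cliquePoly_congr fun w hw => Function.update_of_ne (ne_of_mem_of_not_mem hw hv) _ _]
    exact hx V'

lemma cliquePoly_pos_of_le {x y : V → ℝ} (hx : ∀ V', 0 < cliquePoly G V' x) (hyx : y ≤ x) :
    ∀ V', 0 < cliquePoly G V' y := by
  have key : ∀ s : Finset V, ∀ V', 0 < cliquePoly G V' (s.piecewise y x) := by
    intro s
    induction s using Finset.induction_on with
    | empty => simpa using hx
    | insert v s hv ih =>
      rw [Finset.piecewise_insert]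
      exact cliquePoly_update_pos ih ((Finset.piecewise_eq_of_notMem _ _ _ hv).symm ▸ hyx v)
  simpa using key Finset.univ

end CliquePoly

section MinK

variable {G : SimpleGraph V}

lemma minK_eq_inf' (x : V → ℝ) :
    minK G x = Finset.univ.inf' Finset.univ_nonempty fun V' => cliquePoly G V' x :=
  rfl

lemma minK_le (V' : Finset V) (x : V → ℝ) : minK G x ≤ cliquePoly G V' x :=
  Finset.inf'_le _ (Finset.mem_univ _)

lemma minK_pos_iff {x : V → ℝ} : 0 < minK G x ↔ ∀ V', 0 < cliquePoly G V' x := by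
  rw [minK_eq_inf', Finset.lt_inf'_iff]
  simp only [Finset.mem_univ, true_imp_iff]

lemma minK_zero : minK G 0 = 1 := by
  simp only [minK_eq_inf', cliquePoly_zero, Finset.inf'_const]

lemma continuous_minK : Continuous (minK G) :=
  Continuous.finset_inf'_apply _ fun V' _ => continuous_cliquePoly V'

lemma minK_pos_of_le {x y : V → ℝ} (hx : 0 < minK G x) (hyx : y ≤ x) : 0 < minK G y :=
  minK_pos_iff.2 (cliquePoly_pos_of_le (minK_pos_iff.1 hx) hyx)

lemma mem_regionR_iff {x : V → ℝ} (hx : 0 ≤ x) : x ∈ regionR G ↔ 0 < minK G x := by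
  refine ⟨fun h => minK_pos_iff.2 h.2, fun h => ⟨fun v => ⟨hx v, ?_⟩, minK_pos_iff.1 h⟩⟩
  have := minK_pos_iff.1 h {v}
  rw [cliquePoly_singleton] at this
  linarith

end MinK

section Rho

variable {G : SimpleGraph V} {u : V → ℝ}

lemma continuous_minK_smul_left : Continuous fun r : ℝ => minK G (r • u) :=
  continuous_minK.comp (continuous_id.smul continuous_const)

/-- Intermediate value theorem, started from `minK 0 = 1`. -/
lemma exists_minK_smul_eq_zero {r : ℝ} (hr : 0 ≤ r) (h : minK G (r • u) ≤ 0) :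
    ∃ s ∈ Set.Icc 0 r, minK G (s • u) = 0 :=
  intermediate_value_Icc' hr continuous_minK_smul_left.continuousOn
    (show (0 : ℝ) ∈ Set.Icc _ _ from ⟨h, by rw [zero_smul, minK_zero]; exact zero_le_one⟩)

lemma rho_le {r : ℝ} (hr : 0 ≤ r) (h : minK G (r • u) = 0) : rho G u ≤ r :=
  csInf_le ⟨0, fun _ h => h.1⟩ ⟨hr, h⟩

lemma rho_le_of_minK_nonpos {r : ℝ} (hr : 0 ≤ r) (h : minK G (r • u) ≤ 0) : rho G u ≤ r := by
  obtain ⟨s, hs, hs0⟩ := exists_minK_smul_eq_zero hr h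
  exact (rho_le hs.1 hs0).trans hs.2

lemma exists_minK_smul_neg (hu : 0 ≤ u) (hu0 : u ≠ 0) :
    ∃ R : ℝ, 0 ≤ R ∧ minK G (R • u) < 0 := by
  obtain ⟨v, hv⟩ : ∃ v, 0 < u v := by
    by_contra! h
    exact hu0 (le_antisymm h hu)
  refine ⟨2 / u v, by positivity, ?_⟩
  have h := minK_le (G := G) {v} ((2 / u v) • u)
  rw [cliquePoly_singleton, Pi.smul_apply, smul_eq_mul, div_mul_cancel₀ 2 hv.ne'] at h
  linarith

variable (hu : 0 ≤ u) (hu0 : u ≠ 0)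
include hu hu0

lemma rho_nonneg_and_minK_eq_zero : 0 ≤ rho G u ∧ minK G (rho G u • u) = 0 := by
  obtain ⟨R, hR, hneg⟩ := exists_minK_smul_neg (G := G) hu hu0
  obtain ⟨s, hs, hs0⟩ := exists_minK_smul_eq_zero hR hneg.le
  have hclosed : IsClosed {r : ℝ | 0 ≤ r ∧ minK G (r • u) = 0} :=
    isClosed_Ici.inter (isClosed_singleton.preimage continuous_minK_smul_left)
  exact hclosed.csInf_mem ⟨s, hs.1, hs0⟩ ⟨0, fun _ h => h.1⟩

lemma lt_rho_iff {r : ℝ} (hr : 0 ≤ r) : r < rho G u ↔ 0 < minK G (r • u) := by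
  constructor
  · intro h
    by_contra! hle
    exact (rho_le_of_minK_nonpos hr hle).not_gt h
  · intro h
    by_contra! hle
    have hzero := (rho_nonneg_and_minK_eq_zero (G := G) hu hu0).2
    exact (minK_pos_of_le h (smul_le_smul_of_nonneg_right hle hu)).ne' hzero

lemma rho_pos : 0 < rho G u :=
  (lt_rho_iff hu hu0 le_rfl).2 (by rw [zero_smul, minK_zero]; exact one_pos)

lemma smul_mem_regionR_iff {r : ℝ} (hr : 0 ≤ r) : r • u ∈ regionR G ↔ r < rho G u := by
  rw [lt_rho_iff hu hu0 hr, mem_regionR_iff (smul_nonneg hr hu)]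

end Rho

section RhoContinuous

open Filter Topology

variable {G : SimpleGraph V}

lemma rho_le_of_le_smul {u u' : V → ℝ} (hu : 0 ≤ u) (hu0 : u ≠ 0) {r : ℝ} (hr : 0 ≤ r)
    (h : rho G u • u ≤ r • u') : rho G u' ≤ r :=
  rho_le_of_minK_nonpos hr <| not_lt.1 fun hpos =>
    (minK_pos_of_le hpos h).ne' (rho_nonneg_and_minK_eq_zero hu hu0).2

/-- Lower semicontinuity comes from `lt_rho_iff` and the continuity of `minK`; upper
semicontinuity from `rho_le_of_le_smul`, since `ρ(u) • u ≤ c • u'` for `c > ρ(u)` and nonnegative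
`u'` close to `u`. -/
lemma continuousOn_rho : ContinuousOn (rho G) {u | 0 ≤ u ∧ u ≠ 0} := by
  rintro u ⟨hu, hu0⟩
  refine tendsto_order.2 ⟨fun a ha => ?_, fun b hb => ?_⟩
  · rcases lt_or_ge a 0 with ha0 | ha0
    · exact eventually_nhdsWithin_of_forall fun u' hu' => ha0.trans (rho_pos hu'.1 hu'.2)
    · have hmin : Tendsto (fun u' => minK G (a • u')) (𝓝[{u | 0 ≤ u ∧ u ≠ 0}] u)
          (𝓝 (minK G (a • u))) :=
        (continuous_minK.comp (continuous_const_smul a)).continuousWithinAt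
      filter_upwards [hmin.eventually_const_lt ((lt_rho_iff hu hu0 ha0).1 ha),
        self_mem_nhdsWithin] with u' h hu'
      exact (lt_rho_iff hu'.1 hu'.2 ha0).2 h
  · obtain ⟨c, hρc, hcb⟩ := exists_between hb
    have hc : 0 < c := (rho_pos hu hu0).trans hρc
    have hcoord : ∀ v, ∀ᶠ u' in 𝓝[{u | 0 ≤ u ∧ u ≠ 0}] u, rho G u * u v ≤ c * u' v := by
      intro v
      rcases (hu v).eq_or_lt with h | h
      · exact eventually_nhdsWithin_of_forall fun u' hu' => by
          rw [← h, Pi.zero_apply, mul_zero]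
          exact mul_nonneg hc.le (hu'.1 v)
      · have hv : Tendsto (fun u' : V → ℝ => c * u' v) (𝓝[{u | 0 ≤ u ∧ u ≠ 0}] u)
            (𝓝 (c * u v)) :=
          (continuous_const.mul (continuous_apply v)).continuousWithinAt
        exact (hv.eventually_const_lt (mul_lt_mul_of_pos_right hρc h)).mono fun _ h => h.le
    filter_upwards [eventually_all.2 hcoord] with u' h
    exact (rho_le_of_le_smul hu hu0 hc.le h).trans_lt hcb

end RhoContinuous

section EucNorm

lemma eucNorm_eq_norm (x : V → ℝ) : eucNorm x = ‖WithLp.toLp 2 x‖ := by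
  simp [eucNorm, EuclideanSpace.norm_eq]

lemma eucNorm_nonneg (x : V → ℝ) : 0 ≤ eucNorm x := Real.sqrt_nonneg _

lemma eucNorm_smul (c : ℝ) (x : V → ℝ) : eucNorm (c • x) = |c| * eucNorm x := by
  rw [eucNorm_eq_norm, eucNorm_eq_norm, WithLp.toLp_smul, norm_smul, Real.norm_eq_abs]

lemma eucNorm_pos {x : V → ℝ} (hx : x ≠ 0) : 0 < eucNorm x := by
  rw [eucNorm_eq_norm]
  exact norm_pos_iff.2 ((WithLp.toLp_eq_zero 2).not.2 hx)

lemma apply_le_eucNorm (x : V → ℝ) (v : V) : x v ≤ eucNorm x := by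
  rw [eucNorm_eq_norm]
  exact (le_abs_self _).trans (PiLp.norm_apply_le (WithLp.toLp 2 x) v)

lemma continuous_eucNorm : Continuous (eucNorm : (V → ℝ) → ℝ) := by
  simpa only [← eucNorm_eq_norm] using (PiLp.continuous_toLp 2 fun _ : V => ℝ).norm

lemma isCompact_nonneg_eucSphere : IsCompact {u : V → ℝ | 0 ≤ u ∧ eucNorm u = 1} :=
  isCompact_Icc.of_isClosed_subset
    ((isClosed_le continuous_const continuous_id).inter
      (isClosed_eq continuous_eucNorm continuous_const))
    fun u hu => ⟨hu.1, fun v => hu.2 ▸ apply_le_eucNorm u v⟩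

noncomputable def eucNormalize (y : V → ℝ) : V → ℝ := (eucNorm y)⁻¹ • y

lemma eucNormalize_nonneg {y : V → ℝ} (hy : 0 ≤ y) : 0 ≤ eucNormalize y :=
  smul_nonneg (inv_nonneg.2 (eucNorm_nonneg y)) hy

lemma eucNorm_eucNormalize {y : V → ℝ} (hy : y ≠ 0) : eucNorm (eucNormalize y) = 1 := by
  rw [eucNormalize, eucNorm_smul, abs_inv, abs_of_nonneg (eucNorm_nonneg y),
    inv_mul_cancel₀ (eucNorm_pos hy).ne']

lemma eucNormalize_ne_zero {y : V → ℝ} (hy : y ≠ 0) : eucNormalize y ≠ 0 := fun h => by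
  simpa [h, eucNorm] using eucNorm_eucNormalize hy

lemma eucNorm_smul_eucNormalize {y : V → ℝ} (hy : y ≠ 0) : eucNorm y • eucNormalize y = y := by
  rw [eucNormalize, smul_smul, mul_inv_cancel₀ (eucNorm_pos hy).ne', one_smul]

lemma eucNormalize_smul {c : ℝ} (hc : 0 < c) (y : V → ℝ) :
    eucNormalize (c • y) = eucNormalize y := by
  rw [eucNormalize, eucNormalize, eucNorm_smul, abs_of_pos hc, smul_smul, mul_inv,
    mul_right_comm, inv_mul_cancel₀ hc.ne', one_mul]

lemma continuousOn_eucNormalize : ContinuousOn (eucNormalize (V := V)) {0}ᶜ :=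
  (continuous_eucNorm.continuousOn.inv₀ fun _ hy => (eucNorm_pos hy).ne').smul continuousOn_id

end EucNorm

section RadialScale

open Filter Topology

/-- At the origin only boundedness of the scalar factor matters. -/
lemma continuousOn_smul_self {E : Type*} [NormedAddCommGroup E] [NormedSpace ℝ E] {s : Set E}
    {g : E → ℝ} (hg : ContinuousOn g (s \ {0})) (hb : BddAbove ((fun y => |g y|) '' (s \ {0}))) :
    ContinuousOn (fun y => g y • y) s := by
  intro y hy
  rcases eq_or_ne y 0 with rfl | hy0
  · obtain ⟨C, hC⟩ := hb
    have hbound : ∀ y ∈ s, ‖g y • y‖ ≤ C * ‖y‖ := by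
      intro y hy
      rcases eq_or_ne y 0 with rfl | hy0
      · simp
      · rw [norm_smul, Real.norm_eq_abs]
        exact mul_le_mul_of_nonneg_right (hC ⟨y, ⟨hy, hy0⟩, rfl⟩) (norm_nonneg y)
    have hlim : Tendsto (fun y : E => C * ‖y‖) (𝓝[s] 0) (𝓝 0) := by
      refine (Continuous.tendsto' ?_ (0 : E) 0 ?_).mono_left nhdsWithin_le_nhds
      · fun_prop
      · simp
    simpa [ContinuousWithinAt] using
      squeeze_zero_norm' (eventually_nhdsWithin_of_forall hbound) hlim
  · exact ((hg y ⟨hy, hy0⟩).mono_of_mem_nhdsWithin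
      (inter_mem_nhdsWithin s (isOpen_compl_singleton.mem_nhds hy0))).smul continuousWithinAt_id

noncomputable def radialScale (f : (V → ℝ) → ℝ) (y : V → ℝ) : V → ℝ := f (eucNormalize y) • y

lemma radialScale_zero (f : (V → ℝ) → ℝ) : radialScale f 0 = 0 := smul_zero _

lemma radialScale_radialScale (f : (V → ℝ) → ℝ) {g : (V → ℝ) → ℝ} {y : V → ℝ}
    (hg : 0 < g (eucNormalize y)) :
    radialScale f (radialScale g y) = (f (eucNormalize y) * g (eucNormalize y)) • y := by
  rw [radialScale, radialScale, eucNormalize_smul hg, smul_smul]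

/-- The scale factor is bounded because `f` is continuous on the compact nonnegative unit
sphere. -/
lemma continuousOn_radialScale {f : (V → ℝ) → ℝ} (hf : ContinuousOn f {u | 0 ≤ u ∧ u ≠ 0})
    {s : Set (V → ℝ)} (hs : ∀ y ∈ s, 0 ≤ y) : ContinuousOn (radialScale f) s := by
  have hmaps : ∀ y ∈ s \ {0}, eucNormalize y ∈ {u : V → ℝ | 0 ≤ u ∧ u ≠ 0} := fun y hy =>
    ⟨eucNormalize_nonneg (hs y hy.1), eucNormalize_ne_zero hy.2⟩
  refine continuousOn_smul_self (hf.comp (continuousOn_eucNormalize.mono fun y hy => hy.2) hmaps)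
    ((isCompact_nonneg_eucSphere.bddAbove_image (hf.mono ?_).abs).mono ?_)
  · exact fun u hu => ⟨hu.1, fun h => by simp [h, eucNorm] at hu⟩
  · rintro _ ⟨y, hy, rfl⟩
    exact ⟨eucNormalize y, ⟨(hmaps y hy).1, eucNorm_eucNormalize hy.2⟩, rfl⟩

end RadialScale

section Homeomorph

variable {G : SimpleGraph V}

def nonnegUnitBall : Set (V → ℝ) := {y | (∀ v, y v ∈ Set.Icc (0 : ℝ) 1) ∧ eucNorm y < 1}

lemma nonneg_of_mem_nonnegUnitBall {y : V → ℝ} (hy : y ∈ nonnegUnitBall) : 0 ≤ y :=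
  fun v => (hy.1 v).1

lemma nonneg_of_mem_regionR {x : V → ℝ} (hx : x ∈ regionR G) : 0 ≤ x :=
  fun v => (hx.1 v).1

lemma zero_mem_regionR : (0 : V → ℝ) ∈ regionR G :=
  (mem_regionR_iff le_rfl).2 (by rw [minK_zero]; exact one_pos)

lemma mem_regionR_iff_eucNorm_lt_rho {x : V → ℝ} (hx : 0 ≤ x) (hx0 : x ≠ 0) :
    x ∈ regionR G ↔ eucNorm x < rho G (eucNormalize x) := by
  conv_lhs => rw [← eucNorm_smul_eucNormalize hx0]
  exact smul_mem_regionR_iff (eucNormalize_nonneg hx) (eucNormalize_ne_zero hx0)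
    (eucNorm_nonneg x)

lemma rho_eucNormalize_pos {y : V → ℝ} (hy : 0 ≤ y) (hy0 : y ≠ 0) :
    0 < rho G (eucNormalize y) :=
  rho_pos (eucNormalize_nonneg hy) (eucNormalize_ne_zero hy0)

lemma radialScale_rho_mem_regionR {y : V → ℝ} (hy : y ∈ nonnegUnitBall) :
    radialScale (rho G) y ∈ regionR G := by
  rcases eq_or_ne y 0 with rfl | hy0
  · rw [radialScale_zero]
    exact zero_mem_regionR
  have hy' := nonneg_of_mem_nonnegUnitBall hy
  have hρ := rho_eucNormalize_pos (G := G) hy' hy0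
  rw [radialScale, mem_regionR_iff_eucNorm_lt_rho (smul_nonneg hρ.le hy') (smul_ne_zero hρ.ne' hy0),
    eucNormalize_smul hρ, eucNorm_smul, abs_of_pos hρ]
  exact mul_lt_of_lt_one_right hρ hy.2

lemma radialScale_inv_rho_mem_nonnegUnitBall {x : V → ℝ} (hx : x ∈ regionR G) :
    radialScale (rho G)⁻¹ x ∈ nonnegUnitBall := by
  rcases eq_or_ne x 0 with rfl | hx0
  · rw [radialScale_zero]
    exact ⟨fun _ => ⟨le_rfl, zero_le_one⟩, by simp [eucNorm]⟩
  have hx' := nonneg_of_mem_regionR hx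
  have hρ := rho_eucNormalize_pos (G := G) hx' hx0
  have hnorm : eucNorm (radialScale (rho G)⁻¹ x) < 1 := by
    rw [radialScale, Pi.inv_apply, eucNorm_smul, abs_inv, abs_of_pos hρ, inv_mul_lt_one₀ hρ]
    exact (mem_regionR_iff_eucNorm_lt_rho hx' hx0).1 hx
  refine ⟨fun v => ⟨smul_nonneg (inv_nonneg.2 hρ.le) hx' v, ?_⟩, hnorm⟩
  exact (apply_le_eucNorm _ v).trans hnorm.le

lemma radialScale_rho_radialScale_inv_rho {x : V → ℝ} (hx : 0 ≤ x) :
    radialScale (rho G) (radialScale (rho G)⁻¹ x) = x := by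
  rcases eq_or_ne x 0 with rfl | hx0
  · simp only [radialScale_zero]
  have hρ := rho_eucNormalize_pos (G := G) hx hx0
  rw [radialScale_radialScale _ (inv_pos.2 hρ), Pi.inv_apply, mul_inv_cancel₀ hρ.ne', one_smul]

lemma radialScale_inv_rho_radialScale_rho {y : V → ℝ} (hy : 0 ≤ y) :
    radialScale (rho G)⁻¹ (radialScale (rho G) y) = y := by
  rcases eq_or_ne y 0 with rfl | hy0
  · simp only [radialScale_zero]
  have hρ := rho_eucNormalize_pos (G := G) hy hy0
  rw [radialScale_radialScale _ hρ, Pi.inv_apply, inv_mul_cancel₀ hρ.ne', one_smul]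

variable (G) in
noncomputable def radialHomeomorph : (nonnegUnitBall : Set (V → ℝ)) ≃ₜ regionR G where
  toFun y := ⟨radialScale (rho G) y, radialScale_rho_mem_regionR y.2⟩
  invFun x := ⟨radialScale (rho G)⁻¹ x, radialScale_inv_rho_mem_nonnegUnitBall x.2⟩
  left_inv y := Subtype.ext (radialScale_inv_rho_radialScale_rho (nonneg_of_mem_nonnegUnitBall y.2))
  right_inv x := Subtype.ext (radialScale_rho_radialScale_inv_rho (nonneg_of_mem_regionR x.2))
  continuous_toFun := (continuousOn_iff_continuous_domRestrict.1
    (continuousOn_radialScale continuousOn_rho fun _ => nonneg_of_mem_nonnegUnitBall)).subtype_mk _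
  continuous_invFun := (continuousOn_iff_continuous_domRestrict.1
    (continuousOn_radialScale (continuousOn_rho.inv₀ fun _ hu => (rho_pos hu.1 hu.2).ne')
      fun _ => nonneg_of_mem_regionR)).subtype_mk _

end Homeomorph

/-- Lemma 4.3(4): `y ↦ ρ(y/‖y‖)·y` is a homeomorphism from
`{y ∈ [0,1]^V : ‖y‖ < 1}` onto `R(G)`. (Note that at `y = 0` the formula gives `0`.) -/
theorem regionR_homeomorph (G : SimpleGraph V) :
    ∃ e : {y : V → ℝ | (∀ v, y v ∈ Set.Icc (0 : ℝ) 1) ∧ eucNorm y < 1} ≃ₜ regionR G,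
      ∀ y : {y : V → ℝ | (∀ v, y v ∈ Set.Icc (0 : ℝ) 1) ∧ eucNorm y < 1},
        (e y : V → ℝ) = rho G ((eucNorm (y : V → ℝ))⁻¹ • (y : V → ℝ)) • (y : V → ℝ) :=
  ⟨radialHomeomorph G, fun _ => rfl⟩
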